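/- The eight polynomials a2_0, a3_0, a4_0, b2_0, b3_0, b4_0, b5_0, b6_0 in the polynomial ring ℂ[w1, w2, w3, w4, w5, w6, w7, w8] are algebraically independent over ℂ. -/

import Mathlib

/-! A polynomial relation among `a2_0, …, b6_0` vanishes on the image of the polynomial map
`ℂ⁸ → ℂ⁸` they define, so it suffices that this map is surjective; over the infinite field `ℂ`
a polynomial vanishing everywhere is zero. Surjectivity holds because the system is triangular:
`(a2_0, b2_0)` is an invertible affine function of `(w1, w8)`, then `a3_0` determines `w2`,
`b3_0` determines `w7`, `(a4_0, b4_0)` determine `(w3, w6)` (with coefficient matrix of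
determinant `16`), `b5_0` determines `w5` and `b6_0` determines `w4`. -/

noncomputable section

namespace E8JacobiQ0

open MvPolynomial

/-- The polynomial ring `ℂ[w1, ..., w8]`; the variable `wⱼ` is `X (j-1)`. -/
abbrev Cw : Type := MvPolynomial (Fin 8) ℂ

def w1 : Cw := X 0
def w2 : Cw := X 1
def w3 : Cw := X 2
def w4 : Cw := X 3
def w5 : Cw := X 4
def w6 : Cw := X 5
def w7 : Cw := X 6
def w8 : Cw := X 7

def a2_0 : Cw := C (-(2/3) : ℂ) * w1 + 12 * w8 - 1440
def a3_0 : Cw := -2 * w2 + 96 * w1 - 1152 * w8 + 103680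
def a4_0 : Cw := C ((4/3) : ℂ) * w1^2 - 4 * w3 - 16 * w6 - 48 * w1 * w8
  - 144 * w8^2 + 400 * w2 + 1440 * w7 + 1728 * w1 + 41472 * w8 - 2073600
def b2_0 : Cw := C (-(1/18) : ℂ) * w1 - 3 * w8 + 840
def b3_0 : Cw := C (-(1/6) : ℂ) * w2 - 4 * w7 - 8 * w1 + 528 * w8 - 79680
def b4_0 : Cw := C ((2/9) : ℂ) * w1^2 - C ((1/3) : ℂ) * w3 - C ((16/3) : ℂ) * w6
  - 24 * w1 * w8 - 120 * w8^2 + C ((424/3) : ℂ) * w2 + 1272 * w7 + 4608 * w1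
  - 25920 * w8 + 3939840
def b5_0 : Cw := C ((2/3) : ℂ) * w1 * w2 - 4 * w5 - 16 * w1 * w7 + 64 * w2 * w8
  + 288 * w7 * w8 - 96 * w1^2 - 60 * w3 - 160 * w6 + 3456 * w8^2 + 800 * w2
  - 24480 * w7 - 108480 * w1 + 933120 * w8 - 97873920
def b6_0 : Cw := C (-(8/27) : ℂ) * w1^3 + w2^2 + C ((4/3) : ℂ) * w1 * w3 - 4 * w4
  - C ((32/3) : ℂ) * w1 * w6 - 48 * w1^2 * w8 + 48 * w2 * w7 + 288 * w7^2
  - 40 * w3 * w8 - 480 * w6 * w8 - 2592 * w1 * w8^2 - 9792 * w8^3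
  + C ((1124/3) : ℂ) * w1 * w2 + 548 * w5 + 6688 * w1 * w7 + 1884 * w2 * w8
  + 25632 * w7 * w8 + 24576 * w1^2 + 12920 * w3 + 88320 * w6
  + 578688 * w1 * w8 + 1714176 * w8^2 - 1694400 * w2 - 8460000 * w7
  - 30102720 * w1 - 104198400 * w8 + 721612800

theorem _root_.MvPolynomial.algebraicIndependent_of_surjective_eval {R σ ι : Type*} [CommRing R]
    [IsDomain R] [Infinite R] (p : ι → MvPolynomial σ R)
    (hp : Function.Surjective fun (x : σ → R) i => eval x (p i)) :
    AlgebraicIndependent R p := by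
  refine algebraicIndependent_iff.2 fun q hq => MvPolynomial.funext fun y => ?_
  obtain ⟨x, rfl⟩ := hp y
  have h := congrArg (aeval x) hq
  rw [comp_aeval_apply, map_zero] at h
  rw [map_zero]
  exact h

/-- Each new unknown enters its equation linearly, so the rest of that equation is its value
with the unknown set to `0`. -/
def ab0RightInverse (y : Fin 8 → ℂ) : Fin 8 → ℂ :=
  let x1 := 2160 - 9 / 2 * y 3 - 9 / 8 * y 0
  let x8 := 240 - y 3 / 4 + y 0 / 48
  let x2 := (eval ![x1, 0, 0, 0, 0, 0, 0, x8] a3_0 - y 1) / 2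
  let x7 := (eval ![x1, x2, 0, 0, 0, 0, 0, x8] b3_0 - y 4) / 4
  let s := y 2 - eval ![x1, x2, 0, 0, 0, 0, x7, x8] a4_0
  let t := y 5 - eval ![x1, x2, 0, 0, 0, 0, x7, x8] b4_0
  let x3 := t - s / 3
  let x6 := s / 48 - t / 4
  let x5 := (eval ![x1, x2, x3, 0, 0, x6, x7, x8] b5_0 - y 6) / 4
  let x4 := (eval ![x1, x2, x3, 0, x5, x6, x7, x8] b6_0 - y 7) / 4
  ![x1, x2, x3, x4, x5, x6, x7, x8]

theorem eval_ab0RightInverse (y : Fin 8 → ℂ) :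
    (fun i => eval (ab0RightInverse y) (![a2_0, a3_0, a4_0, b2_0, b3_0, b4_0, b5_0, b6_0] i)) =
      y := by
  funext i
  fin_cases i <;>
  simp only [ab0RightInverse, a2_0, a3_0, a4_0, b2_0, b3_0, b4_0, b5_0, b6_0,
    w1, w2, w3, w4, w5, w6, w7, w8, map_add, map_sub, map_neg, map_mul, map_pow,
    eval_ofNat, eval_X, eval_C, Matrix.cons_val, Matrix.cons_val_zero, Matrix.cons_val_one,
    Fin.isValue, Fin.reduceFinMk, Fin.zero_eta, Fin.mk_one] <;>
  ring

theorem ab0_algebraicIndependent :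
    AlgebraicIndependent ℂ
      ![a2_0, a3_0, a4_0, b2_0, b3_0, b4_0, b5_0, b6_0] :=
  algebraicIndependent_of_surjective_eval _ fun y => ⟨ab0RightInverse y, eval_ab0RightInverse y⟩

end E8JacobiQ0
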